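/- arXiv:2011.07519 — 2 statements merged into one kernel-verified Lean document; each statement's English description precedes it below -/
import Mathlib

section
/- Let ι be an n×k integer matrix of rank k such that every k×k minor of ι lies in {−1, 0, 1}. Let p ⊆ {1,…,n} with |p| = k be such that the k×k submatrix P of ι formed by the rows indexed by p is invertible. Then det P = ±1, the inverse P⁻¹ is an integer matrix, and every minor of every size of the n×k matrix ι·P⁻¹ lies in {−1, 0, 1}. -/
private lemma mem3_mul {a b : ℤ} (ha : a ∈ ({-1, 0, 1} : Set ℤ))
    (hb : b ∈ ({-1, 0, 1} : Set ℤ)) : a * b ∈ ({-1, 0, 1} : Set ℤ) := by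
  simp only [Set.mem_insert_iff, Set.mem_singleton_iff] at *
  rcases ha with rfl | rfl | rfl <;> rcases hb with rfl | rfl | rfl <;> norm_num

/-- If `ι` is an `n×k` integer matrix of rank `k` all of whose `k×k` minors
lie in `{-1,0,1}`, and `P` is an invertible `k×k` submatrix of rows of `ι` (indexed by an
embedding `rows : Fin k ↪ Fin n`), then `det P = ±1`, `P⁻¹` is an integer matrix `Q`, and
every minor of every size of `ι·P⁻¹ = ι·Q` lies in `{-1,0,1}`. -/
theorem totally_unimodular_normalization
    (n k : ℕ) (ι : Matrix (Fin n) (Fin k) ℤ)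
    (hrank : (ι.map (Int.cast : ℤ → ℚ)).rank = k)
    (hTU : ∀ rws : Fin k ↪ Fin n, (ι.submatrix rws id).det ∈ ({-1, 0, 1} : Set ℤ))
    (rows : Fin k ↪ Fin n)
    (P : Matrix (Fin k) (Fin k) ℤ) (hP : P = ι.submatrix rows id)
    (hPinv : P.det ≠ 0) :
    (P.det = 1 ∨ P.det = -1) ∧
    ∃ Q : Matrix (Fin k) (Fin k) ℤ, P * Q = 1 ∧ Q * P = 1 ∧
      ∀ (m : ℕ) (rws : Fin m ↪ Fin n) (cls : Fin m ↪ Fin k),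
        ((ι * Q).submatrix rws cls).det ∈ ({-1, 0, 1} : Set ℤ) := by
  classical
  have hPdet : P.det ∈ ({-1, 0, 1} : Set ℤ) := hP ▸ hTU rows
  have hPdet1 : P.det = 1 ∨ P.det = -1 := by
    simp only [Set.mem_insert_iff, Set.mem_singleton_iff] at hPdet
    rcases hPdet with h | h | h
    · exact Or.inr h
    · exact absurd h hPinv
    · exact Or.inl h
  have hsq : P.det * P.det = 1 := by rcases hPdet1 with h | h <;> rw [h] <;> norm_num
  refine ⟨hPdet1, P.det • P.adjugate, ?_, ?_, ?_⟩
  · rw [Matrix.mul_smul, Matrix.mul_adjugate, smul_smul, hsq, one_smul]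
  · rw [Matrix.smul_mul, Matrix.adjugate_mul, smul_smul, hsq, one_smul]
  · set Q : Matrix (Fin k) (Fin k) ℤ := P.det • P.adjugate with hQdef
    have hPQ : P * Q = 1 := by
      rw [hQdef, Matrix.mul_smul, Matrix.mul_adjugate, smul_smul, hsq, one_smul]
    have hQdet : Q.det ∈ ({-1, 0, 1} : Set ℤ) := by
      have h := congrArg Matrix.det hPQ
      rw [Matrix.det_mul, Matrix.det_one] at h
      simp only [Set.mem_insert_iff, Set.mem_singleton_iff]
      rcases hPdet1 with hp | hp <;> rw [hp] at h <;> omega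
    -- every k×k "minor" of ι*Q (allowing repetitions) is in {-1,0,1}
    have key : ∀ (f : Fin k → Fin n) (g : Fin k → Fin k),
        ((ι * Q).submatrix f g).det ∈ ({-1, 0, 1} : Set ℤ) := by
      intro f g
      rw [← Matrix.submatrix_mul_equiv ι Q f (Equiv.refl (Fin k)) g, Matrix.det_mul]
      refine mem3_mul ?_ ?_
      · by_cases hf : Function.Injective f
        · simpa using hTU ⟨f, hf⟩
        · obtain ⟨i, j, hij, hne⟩ := Function.not_injective_iff.mp hf
          refine Or.inr (Or.inl ?_)
          exact Matrix.det_zero_of_row_eq hne (by ext x; simp [hij])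
      · by_cases hg : Function.Injective g
        · have hgb : Function.Bijective g := (Finite.injective_iff_bijective).mp hg
          set e : Equiv.Perm (Fin k) := Equiv.ofBijective g hgb with he
          have : Q.submatrix (Equiv.refl (Fin k)) g = Q.submatrix id e := rfl
          rw [this, Matrix.det_permute']
          refine mem3_mul ?_ hQdet
          rcases Int.units_eq_one_or (Equiv.Perm.sign e) with h | h <;>
            simp [h, Set.mem_insert_iff]
        · obtain ⟨i, j, hij, hne⟩ := Function.not_injective_iff.mp hg
          refine Or.inr (Or.inl ?_)
          exact Matrix.det_zero_of_column_eq hne (by intro x; simp [hij])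
    intro m rws cls
    have hB1 : ∀ (c : Fin k) (x : Fin k), (ι * Q) (rows c) x = (1 : Matrix (Fin k) (Fin k) ℤ) c x := by
      intro c x
      have h : (ι.submatrix rows (Equiv.refl (Fin k))) * (Q.submatrix (Equiv.refl (Fin k)) id)
          = (ι * Q).submatrix rows id := Matrix.submatrix_mul_equiv ι Q rows (Equiv.refl (Fin k)) id
      have h2 : (ι * Q).submatrix rows id = 1 := by
        rw [← h]
        have : ι.submatrix rows (Equiv.refl (Fin k)) = P := by rw [hP]; rfl
        rw [this]
        have : Q.submatrix (Equiv.refl (Fin k)) id = Q := rfl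
        rw [this, hPQ]
      exact congrFun (congrFun h2 c) x
    -- the completed index type
    have hm : m ≤ k := by simpa using Fintype.card_le_of_embedding cls
    set γ := Fin m ⊕ {c : Fin k // c ∉ Set.range ⇑cls} with hγ
    have hcard : Fintype.card γ = k := by
      have h1 : Fintype.card {c : Fin k // c ∈ Set.range ⇑cls} = m := by
        exact (Fintype.card_congr (Equiv.ofInjective ⇑cls cls.injective).symm).trans (Fintype.card_fin m)
      have h2 := Fintype.card_subtype_compl (fun c : Fin k => c ∈ Set.range ⇑cls)
      simp only [hγ, Fintype.card_sum, Fintype.card_fin]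
      rw [h2, h1, Fintype.card_fin]
      omega
    set f0 : γ → Fin n := Sum.elim ⇑rws (fun c => rows c.1) with hf0
    set g0 : γ → Fin k := Sum.elim ⇑cls (fun c => c.1) with hg0
    have hblock : (ι * Q).submatrix f0 g0 =
        Matrix.fromBlocks ((ι * Q).submatrix rws cls)
          (Matrix.of fun i (c : {c : Fin k // c ∉ Set.range ⇑cls}) => (ι * Q) (rws i) c.1)
          0 1 := by
      ext i j
      rcases i with i | c <;> rcases j with j | d
      · rfl
      · rfl
      · have : (ι * Q) (rows c.1) (cls j) = 0 := by
          rw [hB1]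
          exact Matrix.one_apply_ne (fun h => c.2 ⟨j, h.symm⟩)
        simpa [hf0, hg0] using this
      · have : (ι * Q) (rows c.1) d.1 = (1 : Matrix (Fin k) (Fin k) ℤ) c.1 d.1 := hB1 c.1 d.1
        simp only [hf0, hg0, Matrix.submatrix_apply, Sum.elim_inr, Matrix.fromBlocks_apply₂₂]
        rw [this]
        by_cases hcd : c = d
        · subst hcd; simp
        · rw [Matrix.one_apply_ne hcd, Matrix.one_apply_ne (fun h => hcd (Subtype.ext h))]
    have hdet : ((ι * Q).submatrix f0 g0).det = ((ι * Q).submatrix rws cls).det := by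
      rw [hblock, Matrix.det_fromBlocks_zero₂₁, Matrix.det_one, mul_one]
    rw [← hdet]
    set e : γ ≃ Fin k := Fintype.equivFinOfCardEq hcard with he
    have := Matrix.det_submatrix_equiv_self e.symm ((ι * Q).submatrix f0 g0)
    rw [← this, Matrix.submatrix_submatrix]
    exact key (f0 ∘ ⇑e.symm) (g0 ∘ ⇑e.symm)
end

section
/- Let k, r be positive integers, n = k + r, let ι be an n×k real matrix and β an r×n real matrix such that the sequence 0 → ℝ^k →(ι) ℝ^n →(β) ℝ^r → 0 is exact (ι injective, β surjective, ker β = im ι). Let p ⊆ {1,…,n} be a subset of size k whose corresponding rows of ι are linearly independent. Then the image under β of the relatively open orthant {x ∈ ℝ^n : x_i = 0 for i ∈ p and x_i > 0 for i ∉ p} equals the topological interior of the convex cone generated by the columns of β indexed by {1,…,n} \ p, i.e. the interior of {Σ_{i∉p} c_i β(e_i) : c_i ≥ 0}. -/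
/-!
A vector of `ker β = range ι` that vanishes on `p` is `ι a` with `a` orthogonal to the rows of `ι`
indexed by `p`; these span `ℝ^k`, so `a = 0`. Hence the columns `β eᵢ`, `i ∉ p`, are linearly
independent, and as there are `n - k = r` of them they form a basis of `ℝ^r`. In the coordinates
of this basis the cone is the closed positive orthant, whose interior is the open orthant, and that
is the image under `β` of the relatively open orthant of `ℝ^n`.
-/

open Set Matrix Submodule

theorem Finset.restrict_image_univ_pi {α β : Type*} (s : Finset α) {t : α → Set β}
    (ht : ∀ i, (t i).Nonempty) : s.restrict '' Set.univ.pi t = Set.univ.pi fun i : s => t i := by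
  classical
  refine Set.Subset.antisymm ?_ fun d hd => ?_
  · rintro _ ⟨x, hx, rfl⟩ i -
    exact hx i trivial
  choose e he using ht
  refine ⟨fun a => if h : a ∈ s then d ⟨a, h⟩ else e a, fun a _ => ?_, ?_⟩
  · dsimp only
    split_ifs with h
    exacts [hd ⟨a, h⟩ trivial, he a]
  · ext i
    simp [Finset.restrict, i.2]

theorem image_sum_smul_univ_pi {n R M : Type*} [Semiring R] [AddCommMonoid M] [Module R M]
    (v : n → M) (s : Finset n) {t : n → Set R} (ht : ∀ i, (t i).Nonempty) :
    (fun c : n → R => ∑ i ∈ s, c i • v i) '' univ.pi t =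
      Fintype.linearCombination R (fun i : s => v i) '' univ.pi fun i : s => t i := by
  have hcomp : (fun c : n → R => ∑ i ∈ s, c i • v i) =
      Fintype.linearCombination R (fun i : s => v i) ∘ s.restrict := by
    ext c
    simp [Fintype.linearCombination_apply, Finset.restrict, Finset.sum_attach s fun i => c i • v i]
  rw [hcomp, image_comp, s.restrict_image_univ_pi ht]

theorem interior_image_sum_smul_univ_pi_Ici {n E : Type*} [AddCommGroup E] [Module ℝ E]
    [TopologicalSpace E] [IsTopologicalAddGroup E] [ContinuousSMul ℝ E] [T2Space E]
    [FiniteDimensional ℝ E] (v : n → E) (s : Finset n) [DecidablePred (· ∈ s)]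
    (hli : LinearIndependent ℝ fun i : s => v i) (hcard : s.card = Module.finrank ℝ E) :
    interior ((fun c : n → ℝ => ∑ i ∈ s, c i • v i) '' univ.pi fun _ => Ici 0) =
      (fun c : n → ℝ => ∑ i ∈ s, c i • v i) '' univ.pi fun i => if i ∈ s then Ioi 0 else {0} := by
  let b := basisOfLinearIndependentOfCardEqFinrank' _ hli (by simpa using hcard)
  let φ := b.equivFun.symm.toContinuousLinearEquiv.toHomeomorph
  have hφ : ⇑φ = Fintype.linearCombination ℝ fun i : s => v i := by
    ext c
    simp [φ, b, Module.Basis.equivFun_symm_apply, Fintype.linearCombination_apply]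
  rw [image_sum_smul_univ_pi v s fun _ => nonempty_Ici,
    image_sum_smul_univ_pi v s fun i => by split_ifs <;> simp, ← hφ, ← φ.image_interior,
    interior_pi_set finite_univ]
  congr! 3 with i
  simp [i.2]

theorem Matrix.mulVec_eq_sum_of_eq_zero {m n R : Type*} [Fintype n] [CommSemiring R]
    (M : Matrix m n R) (s : Finset n) {x : n → R} (hx : ∀ i ∉ s, x i = 0) :
    M *ᵥ x = ∑ i ∈ s, x i • Mᵀ i := by
  rw [mulVec_eq_sum, Finset.sum_subset s.subset_univ fun i _ hi => by simp [hx i hi]]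
  simp [op_smul_eq_smul]

theorem Matrix.eq_zero_of_mulVec_eq_zero_of_span_rows_eq_top {m n K : Type*} [Fintype n]
    [CommSemiring K] (A : Matrix m n K) {s : Set m}
    (hspan : span K (range fun i : s => A i) = ⊤) {a : n → K} (ha : ∀ i ∈ s, (A *ᵥ a) i = 0) :
    a = 0 := by
  have hdot : (dotProductBilin K K).flip a = 0 :=
    LinearMap.ext_on_range hspan fun i => by simpa [mulVec] using ha i i.2
  exact dotProduct_eq_zero a fun w => by
    simpa [dotProduct_comm] using LinearMap.congr_fun hdot w

theorem Matrix.linearIndependent_transpose_compl_of_ker_eq_range {l m n K : Type*}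
    [Fintype l] [Fintype n] [DecidableEq n] [Field K]
    {ι : Matrix n l K} {β : Matrix m n K}
    (hexact : LinearMap.ker β.mulVecLin = LinearMap.range ι.mulVecLin)
    {p : Finset n} (hspan : span K (range fun i : p => ι i) = ⊤) :
    LinearIndependent K fun i : (pᶜ : Finset n) => βᵀ i := by
  have hsingle : LinearIndependent K fun i : (pᶜ : Finset n) => (Pi.single i.1 1 : n → K) :=
    (Pi.linearIndependent_single_one n K).comp _ Subtype.val_injective
  have hdisj : Disjoint (span K (range fun i : (pᶜ : Finset n) => (Pi.single i.1 1 : n → K)))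
      (LinearMap.ker β.mulVecLin) := by
    rw [Submodule.disjoint_def]
    intro x hx hker
    obtain ⟨c, rfl⟩ := (mem_span_range_iff_exists_fun K).1 hx
    obtain ⟨a, ha⟩ := hexact ▸ hker
    have ha0 : a = 0 := ι.eq_zero_of_mulVec_eq_zero_of_span_rows_eq_top (s := p) hspan fun i hi => by
      rw [← mulVecLin_apply, ha, Finset.sum_apply]
      refine Finset.sum_eq_zero fun j _ => ?_
      simp [ne_of_mem_of_not_mem hi (Finset.mem_compl.1 j.2)]
    rw [← ha, ha0, map_zero]
  have hcols := hsingle.map hdisj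
  simp only [Function.comp_def, mulVecLin_apply, mulVec_single_one] at hcols
  exact hcols

theorem attracting_cone_eq_interior_of_cone_general
    (k r : ℕ) (n : ℕ) (hn : n = k + r)
    (ι : Matrix (Fin n) (Fin k) ℝ) (β : Matrix (Fin r) (Fin n) ℝ)
    (hexact : LinearMap.ker β.mulVecLin = LinearMap.range ι.mulVecLin)
    (p : Finset (Fin n)) (hp : p.card = k)
    (hrows : LinearIndependent ℝ (fun i : p => ι i.1)) :
    (⇑β.mulVecLin) '' {x : Fin n → ℝ | (∀ i ∈ p, x i = 0) ∧ ∀ i ∉ p, 0 < x i} =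
      interior {y : Fin r → ℝ | ∃ c : Fin n → ℝ,
        (∀ i, 0 ≤ c i) ∧ y = ∑ i ∈ pᶜ, c i • β.transpose i} := by
  have hspan : span ℝ (range fun i : p => ι i) = ⊤ :=
    hrows.span_eq_top_of_card_eq_finrank' (by simp [hp])
  have hcone : {y : Fin r → ℝ | ∃ c : Fin n → ℝ, (∀ i, 0 ≤ c i) ∧ y = ∑ i ∈ pᶜ, c i • βᵀ i} =
      (fun c : Fin n → ℝ => ∑ i ∈ pᶜ, c i • βᵀ i) '' univ.pi fun _ => Ici 0 := by
    ext y
    simp only [mem_ofPred_eq, mem_image, mem_univ_pi, mem_Ici, eq_comm]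
  have horthant : {x : Fin n → ℝ | (∀ i ∈ p, x i = 0) ∧ ∀ i ∉ p, 0 < x i} =
      univ.pi fun i => if i ∈ pᶜ then Ioi 0 else {0} := by
    ext x
    simp only [mem_ofPred_eq, mem_univ_pi, Finset.mem_compl]
    grind
  have hcard : pᶜ.card = Module.finrank ℝ (Fin r → ℝ) := by
    rw [Finset.card_compl, Fintype.card_fin, hp, Module.finrank_fin_fun]
    omega
  rw [hcone, interior_image_sum_smul_univ_pi_Ici _ _
    (linearIndependent_transpose_compl_of_ker_eq_range hexact hspan) hcard, horthant]
  exact image_congr fun x hx => mulVec_eq_sum_of_eq_zero β pᶜ fun i hi => by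
    simpa [hi] using hx i (mem_univ i)

/-- For an exact sequence `0 → ℝ^k →(ι) ℝ^n →(β) ℝ^r → 0` and a fixed point
`p` (a size-`k` subset of `{1,…,n}` with the corresponding rows of `ι` linearly independent),
the image under `β` of the relatively open orthant `{x : x_i = 0 for i ∈ p, x_i > 0 for i ∉ p}`
equals the interior of the convex cone generated by the columns of `β` indexed by the
complement of `p`. -/
theorem attracting_cone_eq_interior_of_cone
    (k r : ℕ) (hk : 0 < k) (hr : 0 < r) (n : ℕ) (hn : n = k + r)
    (ι : Matrix (Fin n) (Fin k) ℝ) (β : Matrix (Fin r) (Fin n) ℝ)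
    (hι : Function.Injective ι.mulVecLin)
    (hβ : Function.Surjective β.mulVecLin)
    (hexact : LinearMap.ker β.mulVecLin = LinearMap.range ι.mulVecLin)
    (p : Finset (Fin n)) (hp : p.card = k)
    (hrows : LinearIndependent ℝ (fun i : p => ι i.1)) :
    (⇑β.mulVecLin) '' {x : Fin n → ℝ | (∀ i ∈ p, x i = 0) ∧ ∀ i ∉ p, 0 < x i} =
      interior {y : Fin r → ℝ | ∃ c : Fin n → ℝ,
        (∀ i, 0 ≤ c i) ∧ y = ∑ i ∈ pᶜ, c i • β.transpose i} :=
  attracting_cone_eq_interior_of_cone_general k r n hn ι β hexact p hp hrows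
end
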